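/- Assume ρ_k(x) > 0 for all x ∈ ℝ^d and all k, each C_k < ∞, and N·√S < 1. Then every function of the form u = Σ_{k=1}^N a_k q_k with a ∈ ℝ^N and ∫ u² ρ dx = 1 satisfies ∫_{ℝ^d} |∇u|² ρ dx ≤ N C / (1 − N √S). (In particular, by the min–max principle, the N-th eigenvalue of Δ_ρ satisfies λ_N ≤ N C/(1 − N √S).) -/

import Mathlib

/-!
Write `q_k = √(w_k ρ_k / ρ)`, so that `q_k² ρ = w_k ρ_k` and `∇q_k = (q_k / 2) (∇ρ_k/ρ_k - ∇ρ/ρ)`.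
Cauchy–Schwarz over the `N` summands of `∇u` gives `∫ |∇u|² ρ ≤ N Σ a_k² w_k C_k ≤ N C Σ a_k² w_k`.
The Gram matrix `⟨q_i, q_j⟩_ρ` has diagonal `w_i`, and by Cauchy–Schwarz in the integral,
`⟨q_i, q_j⟩_ρ = √(w_i w_j) ∫ √(ρ_i ρ_j / ρ) √ρ ≤ √(w_i w_j) √S` off the diagonal. A Gershgorin-type
estimate of the quadratic form then gives `1 = ⟨u, u⟩_ρ ≥ (1 - N √S) Σ a_k² w_k`.
-/

open MeasureTheory Real

noncomputable section

open InnerProductSpace Finset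

section Gradient

variable {F : Type*} [NormedAddCommGroup F] [InnerProductSpace ℝ F] [CompleteSpace F]

theorem hasGradientAt_sum_const_mul {ι : Type*} (s : Finset ι) {f : ι → F → ℝ} {f' : ι → F}
    (a : ι → ℝ) {x : F} (hf : ∀ i ∈ s, HasGradientAt (f i) (f' i) x) :
    HasGradientAt (fun y => ∑ i ∈ s, a i * f i y) (∑ i ∈ s, a i • f' i) x := by
  rw [hasGradientAt_iff_hasFDerivAt, map_sum]
  simp only [map_smul]
  exact HasFDerivAt.fun_sum fun i hi => (hf i hi).hasFDerivAt.const_mul (a i)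

theorem HasGradientAt.sqrt_const_mul_div {f g : F → ℝ} {f' g' : F} {x : F} {c : ℝ}
    (hf : HasGradientAt f f' x) (hg : HasGradientAt g g' x) (hc : 0 < c) (hfx : 0 < f x)
    (hgx : 0 < g x) :
    HasGradientAt (fun y => √(c * f y / g y))
      ((√(c * f x / g x) / 2) • ((f x)⁻¹ • f' - (g x)⁻¹ • g')) x := by
  have hq : 0 < c * f x / g x := by positivity
  have h := ((hf.hasFDerivAt.const_mul c).mul
    ((hasDerivAt_inv hgx.ne').comp_hasFDerivAt x hg.hasFDerivAt)).sqrt hq.ne'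
  simp only [Pi.mul_apply, Function.comp_apply, ← div_eq_mul_inv] at h
  rw [hasGradientAt_iff_hasFDerivAt]
  refine h.congr_fderiv ?_
  ext v
  simp only [one_div, mul_inv_rev, neg_smul, smul_neg, smul_add, add_apply, neg_apply, smul_apply,
    toDual_apply_apply, smul_eq_mul, map_smul, map_sub, sub_apply]
  field_simp
  rw [sq_sqrt hq.le]
  field_simp
  ring

end Gradient

theorem norm_sum_sq_le_card_mul_sum_norm_sq {ι E : Type*} [SeminormedAddCommGroup E]
    (s : Finset ι) (v : ι → E) : ‖∑ i ∈ s, v i‖ ^ 2 ≤ #s * ∑ i ∈ s, ‖v i‖ ^ 2 :=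
  (pow_le_pow_left₀ (norm_nonneg _) (norm_sum_le s v) 2).trans (sq_sum_le_card_mul_sum_sq ..)

theorem one_sub_card_mul_mul_sum_le_sum_mul_mul {ι : Type*} [Fintype ι] (G : ι → ι → ℝ) {σ : ℝ}
    (hσ : 0 ≤ σ) (hdiag : ∀ i, 0 ≤ G i i)
    (hoff : ∀ i j, i ≠ j → |G i j| ≤ σ * (√(G i i) * √(G j j))) (a : ι → ℝ) :
    (1 - Fintype.card ι * σ) * ∑ i, a i ^ 2 * G i i ≤ ∑ i, ∑ j, a i * a j * G i j := by
  classical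
  set b : ι → ℝ := fun i => |a i| * √(G i i)
  have hb : ∀ i, b i ^ 2 = a i ^ 2 * G i i := fun i => by
    simp only [b, mul_pow, sq_abs, sq_sqrt (hdiag i)]
  have hterm : ∀ i j, (if i = j then b i ^ 2 else 0) - σ * (b i * b j) ≤ a i * a j * G i j := by
    intro i j
    split_ifs with hij
    · subst hij
      rw [hb, ← sq]
      nlinarith [mul_nonneg hσ (sq_nonneg (b i))]
    · calc 0 - σ * (b i * b j) = -(|a i| * |a j| * (σ * (√(G i i) * √(G j j)))) := by ring
        _ ≤ -(|a i| * |a j| * |G i j|) := by gcongr; exact hoff i j hij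
        _ ≤ a i * a j * G i j := by rw [← abs_mul, ← abs_mul]; exact neg_abs_le _
  calc (1 - Fintype.card ι * σ) * ∑ i, a i ^ 2 * G i i
      ≤ ∑ i, b i ^ 2 - σ * (∑ i, b i) ^ 2 := by
        have := sq_sum_le_card_mul_sum_sq (s := univ) (f := b)
        simp only [hb, card_univ] at this ⊢
        nlinarith
    _ = ∑ i, ∑ j, ((if i = j then b i ^ 2 else 0) - σ * (b i * b j)) := by
        simp only [sum_sub_distrib, sum_ite_eq, mem_univ, if_true, ← mul_sum, sq, sum_mul_sum]
    _ ≤ ∑ i, ∑ j, a i * a j * G i j := sum_le_sum fun i _ => sum_le_sum fun j _ => hterm i j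

theorem integral_sqrt_mul_le_sqrt_mul_sqrt {α : Type*} [MeasurableSpace α] {μ : Measure α}
    {f g : α → ℝ} (hf : 0 ≤ f) (hg : 0 ≤ g) (hfi : Integrable f μ) (hgi : Integrable g μ) :
    ∫ x, √(f x * g x) ∂μ ≤ √(∫ x, f x ∂μ) * √(∫ x, g x ∂μ) := by
  have hL2 : ∀ {h : α → ℝ}, 0 ≤ h → Integrable h μ →
      MemLp (fun x => √(h x)) (ENNReal.ofReal 2) μ := fun {h} hh hhi => by
    rw [ENNReal.ofReal_ofNat,
      memLp_two_iff_integrable_sq hhi.aemeasurable.sqrt.aestronglyMeasurable]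
    exact hhi.congr (Filter.Eventually.of_forall fun x => (sq_sqrt (hh x)).symm)
  have := integral_mul_le_Lp_mul_Lq_of_nonneg Real.HolderConjugate.two_two
    (Filter.Eventually.of_forall fun x => sqrt_nonneg (f x))
    (Filter.Eventually.of_forall fun x => sqrt_nonneg (g x)) (hL2 hf hfi) (hL2 hg hgi)
  simpa only [← sqrt_mul (hf _), rpow_two, sq_sqrt (hf _), sq_sqrt (hg _), ← sqrt_eq_rpow]
    using this

theorem integral_sq_sum_mul_eq {α ι : Type*} [MeasurableSpace α] {μ : Measure α} [Fintype ι]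
    {φ : ι → α → ℝ} {ψ : α → ℝ} (hint : ∀ i j, Integrable (fun x => φ i x * φ j x * ψ x) μ)
    (a : ι → ℝ) :
    ∫ x, (∑ i, a i * φ i x) ^ 2 * ψ x ∂μ = ∑ i, ∑ j, a i * a j * ∫ x, φ i x * φ j x * ψ x ∂μ := by
  have hexpand : ∀ x, (∑ i, a i * φ i x) ^ 2 * ψ x =
      ∑ i, ∑ j, a i * a j * (φ i x * φ j x * ψ x) := fun x => by
    rw [sq, sum_mul_sum, sum_mul]
    exact sum_congr rfl fun i _ => by rw [sum_mul]; exact sum_congr rfl fun j _ => by ring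
  simp only [hexpand]
  rw [integral_finsetSum _ fun i _ => integrable_finsetSum _ fun j _ => (hint i j).const_mul _]
  refine sum_congr rfl fun i _ => ?_
  rw [integral_finsetSum _ fun j _ => (hint i j).const_mul _]
  exact sum_congr rfl fun j _ => integral_const_mul _ _

section Mixture

variable {α ι : Type*} [Fintype ι]

def mixture (w : ι → ℝ) (ρ : ι → α → ℝ) (x : α) : ℝ := ∑ k, w k * ρ k x

/-- The paper's `q_k`. -/
def sqrtPosterior (w : ι → ℝ) (ρ : ι → α → ℝ) (k : ι) (x : α) : ℝ :=
  √(w k * ρ k x / mixture w ρ x)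

variable {w : ι → ℝ} {ρ : ι → α → ℝ}

theorem mixture_pos [Nonempty ι] (hw : ∀ k, 0 < w k) (hρ : ∀ k x, 0 < ρ k x) (x : α) :
    0 < mixture w ρ x :=
  sum_pos (fun k _ => mul_pos (hw k) (hρ k x)) univ_nonempty

theorem mul_le_mixture (hw : ∀ k, 0 < w k) (hρ : ∀ k x, 0 < ρ k x) (k : ι) (x : α) :
    w k * ρ k x ≤ mixture w ρ x :=
  single_le_sum (fun i _ => (mul_pos (hw i) (hρ i x)).le) (mem_univ k)

theorem sqrtPosterior_sq_mul_mixture [Nonempty ι] (hw : ∀ k, 0 < w k) (hρ : ∀ k x, 0 < ρ k x)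
    (k : ι) (x : α) : sqrtPosterior w ρ k x ^ 2 * mixture w ρ x = w k * ρ k x := by
  have := mixture_pos hw hρ x
  rw [sqrtPosterior, sq_sqrt (div_nonneg (mul_pos (hw k) (hρ k x)).le this.le)]
  field_simp

theorem sqrtPosterior_mul_sqrtPosterior_mul_mixture [Nonempty ι] (hw : ∀ k, 0 < w k)
    (hρ : ∀ k x, 0 < ρ k x) (i j : ι) (x : α) :
    sqrtPosterior w ρ i x * sqrtPosterior w ρ j x * mixture w ρ x =
      √(w i * ρ i x * (w j * ρ j x)) := by
  have hx := mixture_pos hw hρ x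
  have hi := div_nonneg (mul_pos (hw i) (hρ i x)).le hx.le
  have hj := div_nonneg (mul_pos (hw j) (hρ j x)).le hx.le
  have : w i * ρ i x * (w j * ρ j x) =
      w i * ρ i x / mixture w ρ x * (w j * ρ j x / mixture w ρ x) * mixture w ρ x ^ 2 := by
    field_simp
  rw [this, sqrt_mul (mul_nonneg hi hj), sqrt_mul hi, sqrt_sq hx.le, sqrtPosterior, sqrtPosterior]

variable [MeasurableSpace α] {μ : Measure α}

theorem integrable_mixture (hρi : ∀ k, Integrable (ρ k) μ) : Integrable (mixture w ρ) μ :=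
  integrable_finsetSum _ fun k _ => (hρi k).const_mul (w k)

theorem integral_mixture (hρ1 : ∀ k, ∫ x, ρ k x ∂μ = 1) (hw1 : ∑ k, w k = 1) :
    ∫ x, mixture w ρ x ∂μ = 1 := by
  have hρi k : Integrable (ρ k) μ := .of_integral_ne_zero (by simp [hρ1 k])
  simp only [mixture]
  rw [integral_finsetSum _ fun k _ => (hρi k).const_mul (w k)]
  simp [integral_const_mul, hρ1, hw1]

theorem integrable_mul_div_mixture [Nonempty ι] (hw : ∀ k, 0 < w k) (hρ : ∀ k x, 0 < ρ k x)
    (hρi : ∀ k, Integrable (ρ k) μ) (i j : ι) :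
    Integrable (fun x => ρ i x * ρ j x / mixture w ρ x) μ := by
  refine ((hρi i).const_mul (w j)⁻¹).mono' (((hρi i).aemeasurable.mul (hρi j).aemeasurable).div
    (integrable_mixture hρi).aemeasurable).aestronglyMeasurable
    (Filter.Eventually.of_forall fun x => ?_)
  have hx := mixture_pos hw hρ x
  rw [norm_of_nonneg (by have := hρ i x; have := hρ j x; positivity), div_le_iff₀ hx]
  calc ρ i x * ρ j x = (w j)⁻¹ * ρ i x * (w j * ρ j x) := by field_simp [(hw j).ne']
    _ ≤ (w j)⁻¹ * ρ i x * mixture w ρ x := by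
      gcongr
      · have := hw j; have := hρ i x; positivity
      · exact mul_le_mixture hw hρ j x

theorem integrable_sqrt_mul_mul [Nonempty ι] (hw : ∀ k, 0 < w k) (hρ : ∀ k x, 0 < ρ k x)
    (hρi : ∀ k, Integrable (ρ k) μ) (i j : ι) :
    Integrable (fun x => √(w i * ρ i x * (w j * ρ j x))) μ := by
  refine (integrable_mixture (w := w) hρi).mono'
    ((((hρi i).aemeasurable.const_mul _).mul ((hρi j).aemeasurable.const_mul _)).sqrt
      |>.aestronglyMeasurable) (Filter.Eventually.of_forall fun x => ?_)
  rw [norm_of_nonneg (sqrt_nonneg _), sqrt_le_iff, sq]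
  exact ⟨(mixture_pos hw hρ x).le, mul_le_mul (mul_le_mixture hw hρ i x)
    (mul_le_mixture hw hρ j x) (mul_pos (hw j) (hρ j x)).le (mixture_pos hw hρ x).le⟩

theorem integral_sqrt_mul_mul_le [Nonempty ι] (hw : ∀ k, 0 < w k) (hρ : ∀ k x, 0 < ρ k x)
    (hρi : ∀ k, Integrable (ρ k) μ) (hμ : ∫ x, mixture w ρ x ∂μ = 1) (i j : ι) :
    ∫ x, √(w i * ρ i x * (w j * ρ j x)) ∂μ ≤
      √(w i) * √(w j) * √(∫ x, ρ i x * ρ j x / mixture w ρ x ∂μ) := by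
  have hpt : ∀ x, √(w i * ρ i x * (w j * ρ j x)) =
      √(w i) * √(w j) * √(ρ i x * ρ j x / mixture w ρ x * mixture w ρ x) := fun x => by
    have hx := (mixture_pos hw hρ x).ne'
    rw [div_mul_cancel₀ _ hx, ← sqrt_mul (hw i).le, ← sqrt_mul (mul_pos (hw i) (hw j)).le]
    congr 1
    ring
  simp only [hpt]
  rw [integral_const_mul]
  have := integral_sqrt_mul_le_sqrt_mul_sqrt
    (fun x => by have := hρ i x; have := hρ j x; have := mixture_pos hw hρ x; positivity)
    (fun x => (mixture_pos hw hρ x).le) (integrable_mul_div_mixture hw hρ hρi i j)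
    (integrable_mixture hρi)
  rw [hμ, sqrt_one, mul_one] at this
  gcongr

theorem one_sub_card_mul_sqrt_mul_le_integral [Nonempty ι] (hw : ∀ k, 0 < w k)
    (hw1 : ∑ k, w k = 1) (hρ : ∀ k x, 0 < ρ k x) (hρ1 : ∀ k, ∫ x, ρ k x ∂μ = 1) {S : ℝ}
    (hS : ∀ i j, i ≠ j → ∫ x, ρ i x * ρ j x / mixture w ρ x ∂μ ≤ S) (a : ι → ℝ) :
    (1 - Fintype.card ι * √S) * ∑ k, a k ^ 2 * w k ≤
      ∫ x, (∑ k, a k * sqrtPosterior w ρ k x) ^ 2 * mixture w ρ x ∂μ := by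
  have hρi k : Integrable (ρ k) μ := .of_integral_ne_zero (by simp [hρ1 k])
  set G : ι → ι → ℝ := fun i j => ∫ x, √(w i * ρ i x * (w j * ρ j x)) ∂μ
  have hdiag : ∀ i, G i i = w i := fun i => by
    simp only [G, sqrt_mul_self (mul_pos (hw i) (hρ i _)).le, integral_const_mul, hρ1, mul_one]
  have hoff : ∀ i j, i ≠ j → |G i j| ≤ √S * (√(G i i) * √(G j j)) := fun i j hij => by
    rw [abs_of_nonneg (integral_nonneg fun x => sqrt_nonneg _), hdiag, hdiag]
    refine (integral_sqrt_mul_mul_le hw hρ hρi (integral_mixture hρ1 hw1) i j).trans ?_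
    rw [mul_comm (√S)]
    gcongr
    exact hS i j hij
  have := one_sub_card_mul_mul_sum_le_sum_mul_mul G (sqrt_nonneg S)
    (fun i => (hdiag i).symm ▸ (hw i).le) hoff a
  simp only [hdiag] at this
  refine this.trans_eq ?_
  rw [integral_sq_sum_mul_eq]
  · simp only [sqrtPosterior_mul_sqrtPosterior_mul_mixture hw hρ, G]
  · intro i j
    simpa only [sqrtPosterior_mul_sqrtPosterior_mul_mixture hw hρ] using
      integrable_sqrt_mul_mul hw hρ hρi i j

end Mixture

section Energy

variable {E ι : Type*} [NormedAddCommGroup E] [InnerProductSpace ℝ E] [CompleteSpace E]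
  [Fintype ι] [Nonempty ι] {w : ι → ℝ} {ρ : ι → E → ℝ}

theorem hasGradientAt_sqrtPosterior (hw : ∀ k, 0 < w k) (hρ : ∀ k x, 0 < ρ k x) {x : E}
    (hdiff : ∀ k, DifferentiableAt ℝ (ρ k) x) (k : ι) :
    HasGradientAt (sqrtPosterior w ρ k) ((sqrtPosterior w ρ k x / 2) •
      ((ρ k x)⁻¹ • gradient (ρ k) x - (mixture w ρ x)⁻¹ • gradient (mixture w ρ) x)) x := by
  have hmix : DifferentiableAt ℝ (mixture w ρ) x := by
    unfold mixture
    fun_prop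
  exact (hdiff k).hasGradientAt.sqrt_const_mul_div hmix.hasGradientAt (hw k) (hρ k x)
    (mixture_pos hw hρ x)

theorem norm_gradient_sq_mul_mixture_le (hw : ∀ k, 0 < w k) (hρ : ∀ k x, 0 < ρ k x) {x : E}
    (hdiff : ∀ k, DifferentiableAt ℝ (ρ k) x) (a : ι → ℝ) :
    ‖gradient (fun y => ∑ k, a k * sqrtPosterior w ρ k y) x‖ ^ 2 * mixture w ρ x ≤
      Fintype.card ι * ∑ k, a k ^ 2 * (w k / 4 * (‖(ρ k x)⁻¹ • gradient (ρ k) x -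
        (mixture w ρ x)⁻¹ • gradient (mixture w ρ) x‖ ^ 2 * ρ k x)) := by
  rw [(hasGradientAt_sum_const_mul univ a
    fun k _ => hasGradientAt_sqrtPosterior hw hρ hdiff k).gradient]
  refine (mul_le_mul_of_nonneg_right (norm_sum_sq_le_card_mul_sum_norm_sq _ _)
    (mixture_pos hw hρ x).le).trans_eq ?_
  rw [card_univ, mul_assoc, sum_mul]
  congr 1
  refine sum_congr rfl fun k _ => ?_
  have := sqrtPosterior_sq_mul_mixture hw hρ k x
  simp only [norm_smul, norm_div, mul_pow, div_pow, norm_eq_abs, sq_abs, abs_two]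
  linear_combination (a k ^ 2 * ‖(ρ k x)⁻¹ • gradient (ρ k) x -
    (mixture w ρ x)⁻¹ • gradient (mixture w ρ) x‖ ^ 2 / 4) * this

variable [MeasurableSpace E] {μ : Measure E}

theorem integral_norm_gradient_sq_mul_mixture_le (hw : ∀ k, 0 < w k) (hρ : ∀ k x, 0 < ρ k x)
    (hdiff : ∀ k, Differentiable ℝ (ρ k)) {C : ℝ}
    (hint : ∀ k, Integrable (fun x => ‖(ρ k x)⁻¹ • gradient (ρ k) x -
      (mixture w ρ x)⁻¹ • gradient (mixture w ρ) x‖ ^ 2 * ρ k x) μ)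
    (hC : ∀ k, 1 / 4 * ∫ x, ‖(ρ k x)⁻¹ • gradient (ρ k) x -
      (mixture w ρ x)⁻¹ • gradient (mixture w ρ) x‖ ^ 2 * ρ k x ∂μ ≤ C) (a : ι → ℝ) :
    ∫ x, ‖gradient (fun y => ∑ k, a k * sqrtPosterior w ρ k y) x‖ ^ 2 * mixture w ρ x ∂μ ≤
      Fintype.card ι * C * ∑ k, a k ^ 2 * w k := by
  have hterm k : Integrable (fun x => a k ^ 2 * (w k / 4 * (‖(ρ k x)⁻¹ • gradient (ρ k) x -
      (mixture w ρ x)⁻¹ • gradient (mixture w ρ) x‖ ^ 2 * ρ k x))) μ :=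
    ((hint k).const_mul _).const_mul _
  calc _ ≤ ∫ x, (Fintype.card ι : ℝ) * ∑ k, a k ^ 2 * (w k / 4 * (‖(ρ k x)⁻¹ • gradient (ρ k) x -
        (mixture w ρ x)⁻¹ • gradient (mixture w ρ) x‖ ^ 2 * ρ k x)) ∂μ :=
        integral_mono_of_nonneg (Filter.Eventually.of_forall fun x =>
          mul_nonneg (sq_nonneg _) (mixture_pos hw hρ x).le)
          ((integrable_finsetSum univ fun k _ => hterm k).const_mul _)
          (Filter.Eventually.of_forall fun x => norm_gradient_sq_mul_mixture_le hw hρ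
            (fun k => hdiff k x) a)
    _ = (Fintype.card ι : ℝ) * ∑ k, a k ^ 2 * w k * (1 / 4 * ∫ x, ‖(ρ k x)⁻¹ • gradient (ρ k) x -
        (mixture w ρ x)⁻¹ • gradient (mixture w ρ) x‖ ^ 2 * ρ k x ∂μ) := by
      rw [integral_const_mul, integral_finsetSum _ fun k _ => hterm k]
      simp only [integral_const_mul]
      congr 1
      exact sum_congr rfl fun k _ => by ring
    _ ≤ (Fintype.card ι : ℝ) * ∑ k, a k ^ 2 * w k * C := by
      gcongr with k
      · exact mul_nonneg (sq_nonneg _) (hw k).le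
      · exact hC k
    _ = Fintype.card ι * C * ∑ k, a k ^ 2 * w k := by rw [← sum_mul]; ring

end Energy

theorem statement8_general {d : ℕ} {N : ℕ}
    (w : Fin N → ℝ) (hw : ∀ k, 0 < w k) (hw1 : ∑ k, w k = 1)
    (ρ : Fin N → EuclideanSpace ℝ (Fin d) → ℝ)
    (hρC1 : ∀ k, ContDiff ℝ 1 (ρ k)) (hρpos : ∀ k x, 0 < ρ k x)
    (hρ1 : ∀ k, ∫ x, ρ k x = 1)
    (ρtot : EuclideanSpace ℝ (Fin d) → ℝ)
    (hρtot : ρtot = fun x => ∑ k, w k * ρ k x)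
    (S : ℝ)
    (hS : IsGreatest
      ((fun p : Fin N × Fin N => ∫ x, ρ p.1 x * ρ p.2 x / ρtot x) ''
        {p | p.1 ≠ p.2}) S)
    (Ccoup : ℝ)
    (hCfin : ∀ k, Integrable (fun x =>
      ‖(ρ k x)⁻¹ • gradient (ρ k) x - (ρtot x)⁻¹ • gradient ρtot x‖ ^ 2 * ρ k x))
    (hC : IsGreatest {c : ℝ | ∃ k, c = (1 / 4) *
      ∫ x, ‖(ρ k x)⁻¹ • gradient (ρ k) x - (ρtot x)⁻¹ • gradient ρtot x‖ ^ 2 * ρ k x} Ccoup)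
    (hNS : (N : ℝ) * Real.sqrt S < 1)
    (a : Fin N → ℝ) (u : EuclideanSpace ℝ (Fin d) → ℝ)
    (hu : u = fun x => ∑ k, a k * Real.sqrt (w k * ρ k x / ρtot x))
    (hnorm : ∫ x, u x ^ 2 * ρtot x = 1) :
    ∫ x, ‖gradient u x‖ ^ 2 * ρtot x ≤
      (N : ℝ) * Ccoup / (1 - (N : ℝ) * Real.sqrt S) := by
  obtain ⟨⟨k₀, -⟩, -, -⟩ := hS.1
  have : Nonempty (Fin N) := ⟨k₀⟩
  obtain rfl : ρtot = mixture w ρ := hρtot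
  obtain rfl : u = fun x => ∑ k, a k * sqrtPosterior w ρ k x := hu
  have hC0 : 0 ≤ Ccoup := by
    obtain ⟨k, rfl⟩ := hC.1
    exact mul_nonneg (by norm_num)
      (integral_nonneg fun x => mul_nonneg (sq_nonneg _) (hρpos k x).le)
  have hmass := one_sub_card_mul_sqrt_mul_le_integral hw hw1 hρpos hρ1
    (fun i j hij => hS.2 ⟨(i, j), hij, rfl⟩) a
  have henergy := integral_norm_gradient_sq_mul_mixture_le hw hρpos
    (fun k => (hρC1 k).differentiable one_ne_zero) hCfin (fun k => hC.2 ⟨k, rfl⟩) a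
  rw [hnorm, Fintype.card_fin] at hmass
  rw [Fintype.card_fin] at henergy
  rw [le_div_iff₀ (sub_pos.2 hNS)]
  calc _ ≤ N * Ccoup * (∑ k, a k ^ 2 * w k) * (1 - N * √S) := by gcongr
    _ ≤ N * Ccoup := by
      rw [mul_assoc]
      exact mul_le_of_le_one_right (by positivity) (by linarith)

/-- upper bound for the `N`-th eigenvalue: every normalized function of the
form `u = Σ_k a_k q_k` satisfies `∫ |∇u|² ρ dx ≤ N C / (1 − N √S)`. -/
theorem statement8 {d : ℕ} {N : ℕ} (hN : 2 ≤ N)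
    (w : Fin N → ℝ) (hw : ∀ k, 0 < w k) (hw1 : ∑ k, w k = 1)
    (ρ : Fin N → EuclideanSpace ℝ (Fin d) → ℝ)
    (hρC1 : ∀ k, ContDiff ℝ 1 (ρ k)) (hρpos : ∀ k x, 0 < ρ k x)
    (hρ1 : ∀ k, ∫ x, ρ k x = 1)
    (ρtot : EuclideanSpace ℝ (Fin d) → ℝ)
    (hρtot : ρtot = fun x => ∑ k, w k * ρ k x)
    (S : ℝ)
    (hS : IsGreatest
      ((fun p : Fin N × Fin N => ∫ x, ρ p.1 x * ρ p.2 x / ρtot x) ''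
        {p | p.1 ≠ p.2}) S)
    (Ccoup : ℝ)
    (hCfin : ∀ k, Integrable (fun x =>
      ‖(ρ k x)⁻¹ • gradient (ρ k) x - (ρtot x)⁻¹ • gradient ρtot x‖ ^ 2 * ρ k x))
    (hC : IsGreatest {c : ℝ | ∃ k, c = (1 / 4) *
      ∫ x, ‖(ρ k x)⁻¹ • gradient (ρ k) x - (ρtot x)⁻¹ • gradient ρtot x‖ ^ 2 * ρ k x} Ccoup)
    (hNS : (N : ℝ) * Real.sqrt S < 1)
    (a : Fin N → ℝ) (u : EuclideanSpace ℝ (Fin d) → ℝ)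
    (hu : u = fun x => ∑ k, a k * Real.sqrt (w k * ρ k x / ρtot x))
    (hnorm : ∫ x, u x ^ 2 * ρtot x = 1) :
    ∫ x, ‖gradient u x‖ ^ 2 * ρtot x ≤
      (N : ℝ) * Ccoup / (1 - (N : ℝ) * Real.sqrt S) :=
  statement8_general w hw hw1 ρ hρC1 hρpos hρ1 ρtot hρtot S hS Ccoup hCfin hC hNS a u hu hnorm
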